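/- Let p be a prime and G a finite group whose order is coprime to p, with an automorphism a of p-power order. If x in G satisfies [x,a,a] = 1, then [x,a] = 1. -/
import Mathlib


/-- The iterated commutator `[x, a, a, ..., a]` (n copies of `a`) of an element `x` of `G`
with an automorphism `a`, computed in the semidirect product: `[x, a] = x⁻¹ * a x`. -/
def autComm {G : Type*} [Group G] (a : G ≃* G) (x : G) : ℕ → G
  | 0 => x
  | n + 1 => (autComm a x n)⁻¹ * a (autComm a x n)

theorem stmt1 {G : Type*} [Group G] [Finite G] (p : ℕ) (hp : p.Prime)
    (hcop : (Nat.card G).Coprime p) (a : G ≃* G) (hord : ∃ m : ℕ, orderOf a = p ^ m)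
    (x : G) (h : autComm a x 2 = 1) : autComm a x 1 = 1 := by
  set y := autComm a x 1 with hy
  have hy' : y = x⁻¹ * a x := rfl
  have hfix : a y = y := by
    have : y⁻¹ * a y = 1 := h
    have := mul_eq_one_iff_eq_inv.mp this
    simpa using this.symm
  have hiter : ∀ k : ℕ, ((a ^ k : G ≃* G)) x = x * y ^ k := by
    intro k
    induction k with
    | zero => simp
    | succ n ih =>
      have hfixn : a (y ^ n) = y ^ n := by
        rw [map_pow, hfix]
      calc ((a ^ (n+1) : G ≃* G)) x = a ((a ^ n : G ≃* G) x) := by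
            rw [pow_succ']; rfl
        _ = a (x * y ^ n) := by rw [ih]
        _ = a x * y ^ n := by rw [map_mul, hfixn]
        _ = x * y ^ (n+1) := by
            rw [pow_succ']
            have : a x = x * y := by rw [hy']; group
            rw [this]; group
  obtain ⟨m, hm⟩ := hord
  have hone : (a ^ (p ^ m) : G ≃* G) = 1 := by
    rw [← hm]; exact pow_orderOf_eq_one a
  have hyp : y ^ (p ^ m) = 1 := by
    have := hiter (p ^ m)
    rw [hone] at this
    simp at this
    exact this
  have h1 : orderOf y ∣ p ^ m := orderOf_dvd_of_pow_eq_one hyp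
  have h2 : orderOf y ∣ Nat.card G := orderOf_dvd_natCard y
  have hcop' : (Nat.card G).Coprime (p ^ m) := hcop.pow_right m
  have : orderOf y = 1 :=
    Nat.eq_one_of_dvd_coprimes hcop' h2 h1
  exact orderOf_eq_one_iff.mp this
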